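/- Let I be a bounded interval, V ⊂ H Hilbert spaces with V compactly embedded in H, k ≥ 0, 1 ≤ p ≤ ∞ and 1 ≤ q ≤ p with q < ∞. Then the embedding W^{k,p}(I; V) ∩ W^{k+1,p}(I; H) ↪ W^{k,q}(I; H) is compact, and the embedding W^{k,∞}(I; V) ∩ W^{k+1,∞}(I; H) ↪ C^k(I; H) is compact. -/

import Mathlib

open Set MeasureTheory Filter
open scoped ENNReal

/-!
Write `F i = (e ∘ u)⁽ⁱ⁾ = e ∘ u⁽ⁱ⁾` and cut `[0, T]` into `m` equal cells. By the `L¹` bound on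
`u⁽ⁱ⁾`, each cell contains a point where `‖u⁽ⁱ⁾‖ ≤ m B / T`, so the value of `F i` there lies in the
compact set `closure (e '' closedBall 0 (m B / T))`; a diagonal argument over all `m`, all cells and
all `i ≤ k` makes these sampled values Cauchy along a single subsequence. Inside a cell, `F i` moves
by at most the integral of `‖F (i + 1)‖` over the cell, and these variations add up to the bounded
`L¹` norm of `F (i + 1)`. Hence the sampled values control `F i` in `L^q`, and even uniformly when
`F (i + 1)` is bounded (`p = ∞`).
-/

section Calculus

variable {E : Type*} [NormedAddCommGroup E]

theorem norm_sub_le_integral_norm_deriv [NormedSpace ℝ E] {f f' : ℝ → E}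
    (hf : ∀ t, HasDerivAt f (f' t) t) (hf' : Continuous f') {s t : ℝ} (hst : s ≤ t) :
    ‖f t - f s‖ ≤ ∫ x in s..t, ‖f' x‖ :=
  image_norm_le_of_norm_deriv_right_le_deriv_boundary (f := fun x => f x - f s)
    (B := fun x => ∫ y in s..x, ‖f' y‖)
    (fun x _ => ((hf x).continuousAt.sub continuousAt_const).continuousWithinAt)
    (fun x _ => ((hf x).sub_const (f s)).hasDerivWithinAt) (by simp)
    (fun x => (hf'.norm.integral_hasStrictDerivAt s x).hasDerivAt) (fun _ _ => le_rfl)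
    ⟨hst, le_rfl⟩

theorem norm_sub_le_integral_norm_deriv_of_mem_Icc [NormedSpace ℝ E] {f f' : ℝ → E}
    (hf : ∀ t, HasDerivAt f (f' t) t) (hf' : Continuous f') {a b s t : ℝ}
    (hs : s ∈ Icc a b) (ht : t ∈ Icc a b) :
    ‖f t - f s‖ ≤ ∫ x in a..b, ‖f' x‖ := by
  wlog hst : s ≤ t generalizing s t
  · rw [norm_sub_rev]
    exact this ht hs (le_of_not_ge hst)
  exact (norm_sub_le_integral_norm_deriv hf hf' hst).trans <|
    intervalIntegral.integral_mono_interval hs.1 hst ht.2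
      (Eventually.of_forall fun _ => norm_nonneg _) (hf'.norm.intervalIntegrable _ _)

theorem norm_sub_le_integral_add_norm_sub_add_integral [NormedSpace ℝ E] {f f' g g' : ℝ → E}
    (hf : ∀ t, HasDerivAt f (f' t) t) (hf' : Continuous f')
    (hg : ∀ t, HasDerivAt g (g' t) t) (hg' : Continuous g')
    {a b s s' t : ℝ} (hs : s ∈ Icc a b) (hs' : s' ∈ Icc a b) (ht : t ∈ Icc a b) :
    ‖f t - g t‖ ≤ (∫ x in a..b, ‖f' x‖) + ‖f s - g s'‖ + ∫ x in a..b, ‖g' x‖ :=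
  calc ‖f t - g t‖ ≤ ‖f t - f s‖ + ‖f s - g s'‖ + ‖g s' - g t‖ := by
        linarith [norm_sub_le_norm_sub_add_norm_sub (f t) (g s') (g t),
          norm_sub_le_norm_sub_add_norm_sub (f t) (f s) (g s')]
    _ ≤ _ := by
      gcongr
      · exact norm_sub_le_integral_norm_deriv_of_mem_Icc hf hf' hs ht
      · exact norm_sub_le_integral_norm_deriv_of_mem_Icc hg hg' ht hs'

theorem exists_mem_Icc_mul_le_integral {g : ℝ → ℝ} (hg : Continuous g) {a b : ℝ} (hab : a ≤ b) :
    ∃ s ∈ Icc a b, (b - a) * g s ≤ ∫ x in a..b, g x := by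
  obtain ⟨s, hs, hmin⟩ := isCompact_Icc.exists_isMinOn (nonempty_Icc.2 hab) hg.continuousOn
  refine ⟨s, hs, ?_⟩
  calc (b - a) * g s = ∫ _ in a..b, g s := by simp
    _ ≤ ∫ x in a..b, g x :=
      intervalIntegral.integral_mono_on hab intervalIntegrable_const (hg.intervalIntegrable _ _)
        fun x hx => hmin hx

theorem integral_le_sum_of_le_on_cells {g : ℝ → ℝ} (hg : Continuous g) (x : ℕ → ℝ)
    (hx : Monotone x) {m : ℕ} {r : ℕ → ℝ}
    (hr : ∀ j < m, ∀ t ∈ Icc (x j) (x (j + 1)), g t ≤ r j) :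
    ∫ t in x 0..x m, g t ≤ ∑ j ∈ Finset.range m, (x (j + 1) - x j) * r j := by
  rw [← intervalIntegral.sum_integral_adjacent_intervals fun j _ => hg.intervalIntegrable _ _]
  refine Finset.sum_le_sum fun j hj => ?_
  calc ∫ t in x j..x (j + 1), g t ≤ ∫ _ in x j..x (j + 1), r j :=
        intervalIntegral.integral_mono_on (hx j.le_succ) (hg.intervalIntegrable _ _)
          intervalIntegrable_const (hr j (Finset.mem_range.1 hj))
    _ = (x (j + 1) - x j) * r j := by simp

theorem exists_lt_mem_Icc_of_mem_Icc (x : ℕ → ℝ) {m : ℕ} (hm : 0 < m) {t : ℝ}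
    (ht : t ∈ Icc (x 0) (x m)) : ∃ j < m, t ∈ Icc (x j) (x (j + 1)) := by
  induction m with
  | zero => exact absurd hm le_rfl.not_gt
  | succ m ih =>
    rcases m.eq_zero_or_pos with rfl | hm'
    · exact ⟨0, one_pos, ht⟩
    by_cases htm : t ≤ x m
    · obtain ⟨j, hj, hjt⟩ := ih hm' ⟨ht.1, htm⟩
      exact ⟨j, hj.trans m.lt_succ_self, hjt⟩
    · exact ⟨m, m.lt_succ_self, (not_le.1 htm).le, ht.2⟩

theorem exists_div_add_mul_lt {c d η : ℝ} (hc : 0 ≤ c) (hd : 0 ≤ d) (hη : 0 < η) :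
    ∃ m : ℕ, 0 < m ∧ ∃ δ : ℝ, 0 < δ ∧ δ ≤ 1 ∧ c / m + d * δ < η := by
  obtain ⟨m, hm⟩ := exists_nat_gt (2 * c / η)
  have hm0 : (0 : ℝ) < m := (div_nonneg (by positivity) hη.le).trans_lt hm
  refine ⟨m, Nat.cast_pos.1 hm0, min 1 (η / (2 * (d + 1))), by positivity, min_le_left _ _, ?_⟩
  have hcm : c / m < η / 2 := by
    rw [div_lt_iff₀ hη] at hm
    rw [div_lt_iff₀ hm0]
    linarith
  have hdδ : d * min 1 (η / (2 * (d + 1))) ≤ η / 2 :=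
    calc d * min 1 (η / (2 * (d + 1))) ≤ (d + 1) * (η / (2 * (d + 1))) :=
          mul_le_mul (by linarith) (min_le_right _ _) (by positivity) (by linarith)
      _ = η / 2 := by field_simp
  linarith

theorem eLpNorm_restrict_Ioo_eq {g : ℝ → E} (hg : Continuous g) {q : ℝ≥0∞} (hq0 : q ≠ 0)
    (hq : q ≠ ⊤) {a b : ℝ} (hab : a ≤ b) :
    eLpNorm g q (volume.restrict (Ioo a b)) =
      ENNReal.ofReal ((∫ t in a..b, ‖g t‖ ^ q.toReal) ^ q.toReal⁻¹) := by
  obtain ⟨C, hC⟩ := (isCompact_Icc (a := a) (b := b)).exists_bound_of_continuousOn hg.continuousOn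
  have hmem : MemLp g q (volume.restrict (Ioo a b)) :=
    .of_bound hg.aestronglyMeasurable C <| (ae_restrict_iff' measurableSet_Ioo).2 <|
      Eventually.of_forall fun t ht => hC t (Ioo_subset_Icc_self ht)
  rw [hmem.eLpNorm_eq_integral_rpow_norm hq0 hq, intervalIntegral.integral_of_le hab,
    integral_Ioc_eq_integral_Ioo]

theorem intervalIntegral_norm_le_of_eLpNorm_le {g : ℝ → E} (hg : Continuous g) {p : ℝ≥0∞}
    (hp : 1 ≤ p) {T : ℝ} (hT : 0 ≤ T) {M : ℝ≥0∞} (hM : M ≠ ⊤)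
    (h : eLpNorm g p (volume.restrict (Ioo 0 T)) ≤ M) :
    ∫ t in 0..T, ‖g t‖ ≤ (M * ENNReal.ofReal T ^ (1 - p.toReal⁻¹)).toReal := by
  have hexp : 0 ≤ 1 - p.toReal⁻¹ := by
    rcases eq_or_ne p ⊤ with rfl | hp'
    · simp
    · exact sub_nonneg.2 (inv_le_one_of_one_le₀ (by simpa using ENNReal.toReal_mono hp' hp))
  have hHolder := eLpNorm_le_eLpNorm_mul_rpow_measure_univ hp hg.aestronglyMeasurable
    (μ := volume.restrict (Ioo 0 T))
  rw [eLpNorm_restrict_Ioo_eq hg one_ne_zero ENNReal.one_ne_top hT] at hHolder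
  simp only [ENNReal.toReal_one, Real.rpow_one, inv_one, Measure.restrict_apply_univ,
    Real.volume_Ioo, sub_zero, one_div] at hHolder
  exact (ENNReal.ofReal_le_iff_le_toReal
    (ENNReal.mul_ne_top hM (ENNReal.rpow_ne_top_of_nonneg hexp ENNReal.ofReal_ne_top))).1
    (hHolder.trans (mul_le_mul_left h _))

theorem norm_le_of_eLpNorm_top_le {g : ℝ → E} (hg : Continuous g) {a b : ℝ} (hab : a < b)
    {M : ℝ≥0∞} (hM : M ≠ ⊤) (h : eLpNorm g ⊤ (volume.restrict (Ioo a b)) ≤ M) :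
    ∀ t ∈ Icc a b, ‖g t‖ ≤ M.toReal := by
  have hae : ∀ᵐ t ∂volume.restrict (Ioo a b), ‖g t‖ ≤ M.toReal := by
    filter_upwards [ae_le_eLpNormEssSup (f := g)] with t ht
    rw [← eLpNorm_exponent_top] at ht
    simpa using ENNReal.toReal_mono hM (ht.trans h)
  have hempty : {t | M.toReal < ‖g t‖} ∩ Ioo a b = ∅ := by
    refine (isOpen_lt continuous_const hg.norm |>.inter isOpen_Ioo).measure_zero_iff_eq_empty
      (μ := volume) |>.1 ?_
    rw [ae_restrict_iff' measurableSet_Ioo, ae_iff] at hae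
    exact measure_mono_null (fun t ht => by simpa [and_assoc] using And.intro ht.2 ht.1) hae
  have hIoo : Ioo a b ⊆ {t | ‖g t‖ ≤ M.toReal} := fun t ht =>
    show ‖g t‖ ≤ M.toReal from not_lt.1 fun hlt => hempty.subset ⟨hlt, ht⟩
  rw [← closure_Ioo hab.ne]
  exact closure_minimal hIoo (isClosed_le hg.norm continuous_const)

theorem ContDiff.hasDerivAt_iteratedDeriv [NormedSpace ℝ E] {f : ℝ → E} {n : WithTop ℕ∞}
    (hf : ContDiff ℝ n f) {i : ℕ} (hi : (i : WithTop ℕ∞) < n) (t : ℝ) :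
    HasDerivAt (iteratedDeriv i f) (iteratedDeriv (i + 1) f t) t := by
  rw [iteratedDeriv_succ]
  exact ((hf.differentiable_iteratedDeriv i hi) t).hasDerivAt

theorem ContinuousLinearMap.iteratedDeriv_comp_left [NormedSpace ℝ E] {F : Type*}
    [NormedAddCommGroup F] [NormedSpace ℝ F] (L : E →L[ℝ] F) {f : ℝ → E} {n : WithTop ℕ∞}
    {i : ℕ} (hf : ContDiff ℝ n f) (hi : i ≤ n) :
    iteratedDeriv i (fun t => L (f t)) = fun t => L (iteratedDeriv i f t) := by
  funext x
  simp only [iteratedDeriv_eq_iteratedFDeriv]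
  rw [show (fun t => L (f t)) = L ∘ f from rfl, L.iteratedFDeriv_comp_left hf.contDiffAt hi]
  rfl

end Calculus

theorem exists_strictMono_forall_cauchySeq {ι X : Type*} [Countable ι] [MetricSpace X]
    {K : ι → Set X} (hK : ∀ i, IsCompact (K i)) {x : ℕ → ι → X} (hx : ∀ n i, x n i ∈ K i) :
    ∃ φ : ℕ → ℕ, StrictMono φ ∧ ∀ i, CauchySeq fun n => x (φ n) i := by
  obtain ⟨y, -, φ, hφ, hlim⟩ := (isCompact_univ_pi hK).tendsto_subseq
    (fun n => mem_univ_pi.2 (hx n))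
  exact ⟨φ, hφ, fun i => ((continuous_apply i).tendsto y |>.comp hlim).cauchySeq⟩

noncomputable def gridPoint (T : ℝ) (m j : ℕ) : ℝ := T / m * j

section gridPoint

variable {T : ℝ} {m j : ℕ}

@[simp] theorem gridPoint_zero : gridPoint T m 0 = 0 := by simp [gridPoint]

theorem gridPoint_self (hm : m ≠ 0) : gridPoint T m m = T :=
  div_mul_cancel₀ T (Nat.cast_ne_zero.2 hm)

theorem gridPoint_succ_sub : gridPoint T m (j + 1) - gridPoint T m j = T / m := by
  simp only [gridPoint]
  push_cast
  ring

theorem monotone_gridPoint (hT : 0 ≤ T) : Monotone (gridPoint T m) := fun _ _ h =>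
  mul_le_mul_of_nonneg_left (Nat.cast_le.2 h) (div_nonneg hT m.cast_nonneg)

theorem Icc_gridPoint_subset (hT : 0 ≤ T) (hj : j < m) :
    Icc (gridPoint T m j) (gridPoint T m (j + 1)) ⊆ Icc 0 T := by
  have h0 := monotone_gridPoint (m := m) hT j.zero_le
  have h1 := monotone_gridPoint (m := m) hT hj
  rw [gridPoint_zero] at h0
  rw [gridPoint_self (j.zero_le.trans_lt hj).ne'] at h1
  exact Icc_subset_Icc h0 h1

theorem exists_mem_Icc_gridPoint_norm_le {E : Type*} [NormedAddCommGroup E] {w : ℝ → E}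
    (hw : Continuous w) (hT : 0 < T) {B : ℝ} (hB : ∫ t in 0..T, ‖w t‖ ≤ B) (hj : j < m) :
    ∃ s ∈ Icc (gridPoint T m j) (gridPoint T m (j + 1)), ‖w s‖ ≤ m / T * B := by
  have hm : (0 : ℝ) < m := Nat.cast_pos.2 (j.zero_le.trans_lt hj)
  have hcell := monotone_gridPoint (m := m) hT.le j.le_succ
  have hsub := Icc_gridPoint_subset hT.le hj
  obtain ⟨s, hs, hsw⟩ := exists_mem_Icc_mul_le_integral hw.norm hcell
  refine ⟨s, hs, ?_⟩
  have h := hsw.trans <| (intervalIntegral.integral_mono_interval (hsub (left_mem_Icc.2 hcell)).1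
    hcell (hsub (right_mem_Icc.2 hcell)).2 (Eventually.of_forall fun _ => norm_nonneg _)
    (hw.norm.intervalIntegrable _ _)).trans hB
  rw [gridPoint_succ_sub, div_mul_eq_mul_div, div_le_iff₀ hm] at h
  rw [div_mul_eq_mul_div, le_div_iff₀ hT]
  linarith

theorem integral_norm_rpow_le_of_cells {E : Type*} [NormedAddCommGroup E] {g : ℝ → E}
    (hg : Continuous g) (hT : 0 ≤ T) (hm : m ≠ 0) {v : ℕ → ℝ} {R : ℝ} (hvR : ∀ j < m, v j ≤ R)
    (hgv : ∀ j < m, ∀ t ∈ Icc (gridPoint T m j) (gridPoint T m (j + 1)), ‖g t‖ ≤ v j)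
    {r : ℝ} (hr : 1 ≤ r) :
    ∫ t in 0..T, ‖g t‖ ^ r ≤ R ^ (r - 1) * (T / m * ∑ j ∈ Finset.range m, v j) := by
  have hpow : ∀ j < m, ∀ t ∈ Icc (gridPoint T m j) (gridPoint T m (j + 1)),
      ‖g t‖ ^ r ≤ R ^ (r - 1) * v j := by
    intro j hj t ht
    have hgt := hgv j hj t ht
    calc ‖g t‖ ^ r = ‖g t‖ ^ (r - 1) * ‖g t‖ := by
          rw [← Real.rpow_add_one' (norm_nonneg _) (by linarith), sub_add_cancel]
      _ ≤ R ^ (r - 1) * v j :=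
          mul_le_mul (Real.rpow_le_rpow (norm_nonneg _) (hgt.trans (hvR j hj)) (by linarith)) hgt
            (norm_nonneg _) (Real.rpow_nonneg ((norm_nonneg _).trans (hgt.trans (hvR j hj))) _)
  have h := integral_le_sum_of_le_on_cells (hg.norm.rpow_const fun _ => Or.inr (by linarith))
    (gridPoint T m) (monotone_gridPoint hT) hpow
  rw [gridPoint_zero, gridPoint_self hm] at h
  simpa only [gridPoint_succ_sub, Finset.mul_sum, mul_left_comm] using h

end gridPoint

section AubinLions

variable {V H : Type*} [NormedAddCommGroup V] [NormedSpace ℝ V] [NormedAddCommGroup H]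

/-- `F n (i + 1)` plays the role of the derivative of `F n i`, so the two integrals are the
variations of `F a i` and `F b i` over the cell. -/
def CellwiseCauchy (T : ℝ) (k : ℕ) (F : ℕ → ℕ → ℝ → H) : Prop :=
  ∀ m : ℕ, ∀ δ > 0, ∃ N : ℕ, ∀ a ≥ N, ∀ b ≥ N, ∀ i ≤ k, ∀ j < m,
    ∀ t ∈ Icc (gridPoint T m j) (gridPoint T m (j + 1)),
      ‖F a i t - F b i t‖ ≤ (∫ s in gridPoint T m j..gridPoint T m (j + 1), ‖F a (i + 1) s‖) +
        δ + ∫ s in gridPoint T m j..gridPoint T m (j + 1), ‖F b (i + 1) s‖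

theorem exists_strictMono_cellwiseCauchy [NormedSpace ℝ H] (e : V →L[ℝ] H)
    (he : IsCompactOperator e) {T : ℝ} (hT : 0 < T) (k : ℕ) (w : ℕ → ℕ → ℝ → V)
    (F : ℕ → ℕ → ℝ → H)
    (hw : ∀ n, ∀ i ≤ k, Continuous (w n i)) (hFw : ∀ n, ∀ i ≤ k, ∀ t, F n i t = e (w n i t))
    (hF : ∀ n, ∀ i ≤ k, ∀ t, HasDerivAt (F n i) (F n (i + 1) t) t)
    (hF' : ∀ n, ∀ i ≤ k, Continuous (F n (i + 1)))
    {B : ℝ} (hwB : ∀ n, ∀ i ≤ k, ∫ t in 0..T, ‖w n i t‖ ≤ B) :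
    ∃ φ : ℕ → ℕ, StrictMono φ ∧ CellwiseCauchy T k (fun n => F (φ n)) := by
  have hsample : ∀ n i m j, ∃ s ∈ Icc (gridPoint T m j) (gridPoint T m (j + 1)),
      i ≤ k → j < m → ‖w n i s‖ ≤ m / T * B := by
    intro n i m j
    by_cases h : i ≤ k ∧ j < m
    · obtain ⟨s, hs, hsB⟩ := exists_mem_Icc_gridPoint_norm_le (hw n i h.1) hT (hwB n i h.1) h.2
      exact ⟨s, hs, fun _ _ => hsB⟩
    · exact ⟨gridPoint T m j, left_mem_Icc.2 (monotone_gridPoint hT.le j.le_succ),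
        fun hi hj => absurd ⟨hi, hj⟩ h⟩
  choose s hs hbound using hsample
  let c : ℕ → ((m : ℕ) × Fin m × Fin (k + 1)) → H := fun n x => F n x.2.2 (s n x.2.2 x.1 x.2.1)
  have hc : ∀ n x, c n x ∈ closure (e '' Metric.closedBall 0 (x.1 / T * B)) := by
    rintro n ⟨m, j, i⟩
    have hi := Nat.lt_succ_iff.1 i.isLt
    exact subset_closure ⟨w n i (s n i m j),
      mem_closedBall_zero_iff.2 (hbound n i m j hi j.isLt), (hFw n i hi _).symm⟩
  obtain ⟨φ, hφ, hcauchy⟩ :=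
    exists_strictMono_forall_cauchySeq (fun _ => he.isCompact_closure_image_closedBall _) hc
  refine ⟨φ, hφ, fun m δ hδ => ?_⟩
  have hev : ∀ᶠ p : ℕ × ℕ in atTop, ∀ j : Fin m, ∀ i : Fin (k + 1),
      dist (c (φ p.1) ⟨m, j, i⟩) (c (φ p.2) ⟨m, j, i⟩) < δ := by
    simp only [eventually_all]
    exact fun j i =>
      (cauchySeq_iff_tendsto_dist_atTop_0.1 (hcauchy ⟨m, j, i⟩)).eventually (gt_mem_nhds hδ)
  obtain ⟨N, hN⟩ := eventually_atTop_prod_self'.1 hev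
  refine ⟨N, fun a ha b hb i hi j hj t ht => ?_⟩
  have hclose := hN a ha b hb ⟨j, hj⟩ ⟨i, Nat.lt_succ_of_le hi⟩
  refine (norm_sub_le_integral_add_norm_sub_add_integral (hF _ i hi) (hF' _ i hi) (hF _ i hi)
    (hF' _ i hi) (hs (φ a) i m j) (hs (φ b) i m j) ht).trans ?_
  rw [← dist_eq_norm]
  gcongr

theorem CellwiseCauchy.exists_eLpNorm_sub_lt {T : ℝ} (hT : 0 < T) {k : ℕ}
    {F : ℕ → ℕ → ℝ → H} (hF : CellwiseCauchy T k F) (hFc : ∀ n, ∀ i ≤ k, Continuous (F n i))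
    (hF' : ∀ n, ∀ i ≤ k, Continuous (F n (i + 1))) {B : ℝ}
    (hB : ∀ n, ∀ i ≤ k, ∫ t in 0..T, ‖F n (i + 1) t‖ ≤ B) {q : ℝ≥0∞} (hq1 : 1 ≤ q) (hq : q ≠ ⊤) :
    ∀ ε : ℝ, 0 < ε → ∃ N : ℕ, ∀ a ≥ N, ∀ b ≥ N, ∀ i ≤ k,
      eLpNorm (fun t => F a i t - F b i t) q (volume.restrict (Ioo 0 T)) < ENNReal.ofReal ε := by
  intro ε hε
  set r := q.toReal
  have hr : 1 ≤ r := by simpa using ENNReal.toReal_mono hq hq1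
  have hB0 : 0 ≤ B := (intervalIntegral.integral_nonneg hT.le fun _ _ => norm_nonneg _).trans
    (hB 0 0 k.zero_le)
  set C := (2 * B + 1) ^ (r - 1)
  have hC : 0 < C := Real.rpow_pos_of_pos (by linarith) _
  obtain ⟨m, hm, δ, hδ, hδ1, hlt⟩ := exists_div_add_mul_lt (c := 2 * T * B) (by positivity)
    hT.le (div_pos (Real.rpow_pos_of_pos hε r) hC)
  obtain ⟨N, hN⟩ := hF m δ hδ
  refine ⟨N, fun a ha b hb i hi => ?_⟩
  set V : ℕ → ℕ → ℝ := fun n j => ∫ s in gridPoint T m j..gridPoint T m (j + 1), ‖F n (i + 1) s‖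
  have hVsum : ∀ n, ∑ j ∈ Finset.range m, V n j ≤ B := fun n => by
    rw [intervalIntegral.sum_integral_adjacent_intervals
      fun j _ => (hF' n i hi).norm.intervalIntegrable _ _, gridPoint_zero, gridPoint_self hm.ne']
    exact hB n i hi
  have hVle : ∀ n, ∀ j < m, V n j ≤ B := fun n j hj =>
    (Finset.single_le_sum (fun j _ => intervalIntegral.integral_nonneg
      (monotone_gridPoint hT.le j.le_succ) fun _ _ => norm_nonneg _)
      (Finset.mem_range.2 hj)).trans (hVsum n)
  have hint := integral_norm_rpow_le_of_cells ((hFc a i hi).sub (hFc b i hi)) hT.le hm.ne'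
    (v := fun j => V a j + δ + V b j) (R := 2 * B + 1)
    (fun j hj => by linarith [hVle a j hj, hVle b j hj]) (hN a ha b hb i hi) hr
  have hsum : T / m * ∑ j ∈ Finset.range m, (V a j + δ + V b j) ≤ 2 * T * B / m + T * δ := by
    rw [Finset.sum_add_distrib, Finset.sum_add_distrib, Finset.sum_const, Finset.card_range,
      nsmul_eq_mul]
    have hm' : (0 : ℝ) < m := Nat.cast_pos.2 hm
    calc T / m * (∑ j ∈ Finset.range m, V a j + m * δ + ∑ j ∈ Finset.range m, V b j)
        ≤ T / m * (B + m * δ + B) := by gcongr <;> apply hVsum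
      _ = 2 * T * B / m + T * δ := by field_simp; ring
  rw [eLpNorm_restrict_Ioo_eq (g := fun t => F a i t - F b i t) ((hFc a i hi).sub (hFc b i hi))
      (by positivity) hq hT.le,
    ENNReal.ofReal_lt_ofReal_iff hε, Real.rpow_inv_lt_iff_of_pos
      (intervalIntegral.integral_nonneg hT.le fun _ _ => by positivity) hε.le (by linarith)]
  calc ∫ t in 0..T, ‖F a i t - F b i t‖ ^ r ≤ C * (2 * T * B / m + T * δ) :=
        hint.trans (mul_le_mul_of_nonneg_left hsum hC.le)
    _ < C * (ε ^ r / C) := mul_lt_mul_of_pos_left hlt hC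
    _ = ε ^ r := mul_div_cancel₀ _ hC.ne'

theorem CellwiseCauchy.exists_norm_sub_lt {T : ℝ} (hT : 0 < T) {k : ℕ} {F : ℕ → ℕ → ℝ → H}
    (hF : CellwiseCauchy T k F) (hF' : ∀ n, ∀ i ≤ k, Continuous (F n (i + 1))) {B : ℝ}
    (hB : ∀ n, ∀ i ≤ k, ∀ t ∈ Icc 0 T, ‖F n (i + 1) t‖ ≤ B) :
    ∀ ε : ℝ, 0 < ε → ∃ N : ℕ, ∀ a ≥ N, ∀ b ≥ N, ∀ i ≤ k, ∀ t ∈ Icc 0 T,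
      ‖F a i t - F b i t‖ < ε := by
  intro ε hε
  have hB0 : 0 ≤ B := (norm_nonneg _).trans (hB 0 0 k.zero_le 0 ⟨le_rfl, hT.le⟩)
  obtain ⟨m, hm, δ, hδ, -, hlt⟩ :=
    exists_div_add_mul_lt (c := 2 * T * B) (by positivity) zero_le_one hε
  obtain ⟨N, hN⟩ := hF m δ hδ
  refine ⟨N, fun a ha b hb i hi t ht => ?_⟩
  obtain ⟨j, hj, htj⟩ := exists_lt_mem_Icc_of_mem_Icc (gridPoint T m) hm
    (by rwa [gridPoint_zero, gridPoint_self hm.ne'])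
  have hvar : ∀ n, ∫ s in gridPoint T m j..gridPoint T m (j + 1), ‖F n (i + 1) s‖ ≤ T / m * B := by
    intro n
    calc ∫ s in gridPoint T m j..gridPoint T m (j + 1), ‖F n (i + 1) s‖
        ≤ ∫ _ in gridPoint T m j..gridPoint T m (j + 1), B :=
          intervalIntegral.integral_mono_on (monotone_gridPoint hT.le j.le_succ)
            ((hF' n i hi).norm.intervalIntegrable _ _) intervalIntegrable_const
            fun s hs => hB n i hi s (Icc_gridPoint_subset hT.le hj hs)
      _ = T / m * B := by rw [intervalIntegral.integral_const, gridPoint_succ_sub, smul_eq_mul]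
  calc ‖F a i t - F b i t‖ ≤ T / m * B + δ + T / m * B := by
        linarith [hN a ha b hb i hi j hj t htj, hvar a, hvar b]
    _ = 2 * T * B / m + 1 * δ := by ring
    _ < ε := hlt

theorem eLpNorm_iteratedDeriv_succ_comp_le [NormedSpace ℝ H] (e : V →L[ℝ] H) {u : ℝ → V} {k i : ℕ}
    (hu : ContDiff ℝ k u) (hi : i ≤ k) {p : ℝ≥0∞} {μ : Measure ℝ} {M : ℝ≥0∞}
    (hV : ∀ i ≤ k, eLpNorm (iteratedDeriv i u) p μ ≤ M)
    (hH : eLpNorm (iteratedDeriv (k + 1) (fun t => e (u t))) p μ ≤ M) :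
    eLpNorm (iteratedDeriv (i + 1) (fun t => e (u t))) p μ ≤ max (ENNReal.ofReal ‖e‖ * M) M := by
  rcases hi.lt_or_eq with hik | rfl
  · rw [e.iteratedDeriv_comp_left hu (by exact_mod_cast hik)]
    calc eLpNorm (fun t => e (iteratedDeriv (i + 1) u t)) p μ
        ≤ ENNReal.ofReal ‖e‖ * eLpNorm (iteratedDeriv (i + 1) u) p μ :=
          eLpNorm_le_mul_eLpNorm_of_ae_le_mul (Eventually.of_forall fun t => e.le_opNorm _) p
      _ ≤ ENNReal.ofReal ‖e‖ * M := by gcongr; exact hV (i + 1) hik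
      _ ≤ _ := le_max_left _ _
  · exact hH.trans (le_max_right _ _)

end AubinLions

theorem stmt16_general {V H : Type*} [NormedAddCommGroup V] [NormedSpace ℝ V]
    [NormedAddCommGroup H] [NormedSpace ℝ H]
    (e : V →L[ℝ] H) (hcomp : IsCompactOperator e)
    (T : ℝ) (hT : 0 < T) (k : ℕ)
    (p q : ℝ≥0∞) (hp : 1 ≤ p) (hq1 : 1 ≤ q) (hq : q ≠ ⊤)
    (u : ℕ → ℝ → V)
    (husm : ∀ n, ContDiff ℝ (k : ℕ∞) (u n))
    (husm' : ∀ n, ContDiff ℝ ((k : ℕ∞) + 1) (fun t => e (u n t)))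
    (M : ℝ≥0∞) (hM : M ≠ ⊤)
    (hbV : ∀ n, ∀ i ≤ k,
      eLpNorm (iteratedDeriv i (u n)) p (volume.restrict (Ioo (0 : ℝ) T)) ≤ M)
    (hbH : ∀ n,
      eLpNorm (iteratedDeriv (k + 1) (fun t => e (u n t))) p (volume.restrict (Ioo (0 : ℝ) T))
        ≤ M) :
    (∃ φ : ℕ → ℕ, StrictMono φ ∧
      ∀ ε : ℝ, 0 < ε → ∃ N : ℕ, ∀ a ≥ N, ∀ b ≥ N, ∀ i ≤ k,
        eLpNorm
            (fun t => iteratedDeriv i (fun s => e (u (φ a) s)) t -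
              iteratedDeriv i (fun s => e (u (φ b) s)) t)
            q (volume.restrict (Ioo (0 : ℝ) T)) < ENNReal.ofReal ε) ∧
    (p = ⊤ → ∃ φ : ℕ → ℕ, StrictMono φ ∧
      ∀ ε : ℝ, 0 < ε → ∃ N : ℕ, ∀ a ≥ N, ∀ b ≥ N, ∀ i ≤ k, ∀ t ∈ Icc (0 : ℝ) T,
        ‖iteratedDeriv i (fun s => e (u (φ a) s)) t -
            iteratedDeriv i (fun s => e (u (φ b) s)) t‖ < ε) := by
  set F : ℕ → ℕ → ℝ → H := fun n i => iteratedDeriv i (fun s => e (u n s))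
  have hwc : ∀ n, ∀ i ≤ k, Continuous (iteratedDeriv i (u n)) := fun n i hi =>
    (husm n).continuous_iteratedDeriv i (by exact_mod_cast hi)
  have hFc : ∀ n, ∀ i ≤ k + 1, Continuous (F n i) := fun n i hi =>
    (husm' n).continuous_iteratedDeriv i (by exact_mod_cast hi)
  have hFw : ∀ n, ∀ i ≤ k, ∀ t, F n i t = e (iteratedDeriv i (u n) t) := fun n i hi t =>
    congrFun (e.iteratedDeriv_comp_left (husm n) (by exact_mod_cast hi)) t
  have hF : ∀ n, ∀ i ≤ k, ∀ t, HasDerivAt (F n i) (F n (i + 1) t) t := fun n i hi =>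
    (husm' n).hasDerivAt_iteratedDeriv (by exact_mod_cast Nat.lt_succ_of_le hi)
  have hF' : ∀ n, ∀ i ≤ k, Continuous (F n (i + 1)) := fun n i hi => hFc n (i + 1) (by omega)
  set M' := max (ENNReal.ofReal ‖e‖ * M) M
  have hM' : M' ≠ ⊤ := max_ne_top (ENNReal.mul_ne_top ENNReal.ofReal_ne_top hM) hM
  have hbF : ∀ n, ∀ i ≤ k, eLpNorm (F n (i + 1)) p (volume.restrict (Ioo 0 T)) ≤ M' :=
    fun n i hi => eLpNorm_iteratedDeriv_succ_comp_le e (husm n) hi (hbV n) (hbH n)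
  obtain ⟨φ, hφ, hcell⟩ := exists_strictMono_cellwiseCauchy e hcomp hT k
    (fun n i => iteratedDeriv i (u n)) F hwc hFw hF hF'
    (fun n i hi => intervalIntegral_norm_le_of_eLpNorm_le (hwc n i hi) hp hT.le hM (hbV n i hi))
  refine ⟨⟨φ, hφ, hcell.exists_eLpNorm_sub_lt hT (fun n i hi => hFc (φ n) i (by omega))
      (fun n => hF' (φ n)) (fun n i hi => intervalIntegral_norm_le_of_eLpNorm_le
        (hF' _ i hi) hp hT.le hM' (hbF (φ n) i hi)) hq1 hq⟩,
    fun hptop => ⟨φ, hφ, hcell.exists_norm_sub_lt hT (fun n => hF' (φ n))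
      fun n i hi => norm_le_of_eLpNorm_top_le (hF' _ i hi) hT hM' (hptop ▸ hbF (φ n) i hi)⟩⟩

/-- Aubin–Lions type compactness: Let `V` be compactly embedded in `H` via `e`,
`I = (0,T)`, `k ≥ 0`, `1 ≤ q ≤ p ≤ ∞` with `q < ∞`. Any sequence bounded in
`W^{k,p}(I;V) ∩ W^{k+1,p}(I;H)` has a subsequence that is Cauchy in `W^{k,q}(I;H)`; if moreover
`p = ∞`, it has a subsequence that is Cauchy in `C^k([0,T];H)`. -/
theorem stmt16 {V H : Type*} [NormedAddCommGroup V] [NormedSpace ℝ V]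
    [NormedAddCommGroup H] [NormedSpace ℝ H]
    (e : V →L[ℝ] H) (hinj : Function.Injective e) (hcomp : IsCompactOperator e)
    (T : ℝ) (hT : 0 < T) (k : ℕ)
    (p q : ℝ≥0∞) (hp : 1 ≤ p) (hq1 : 1 ≤ q) (hqp : q ≤ p) (hq : q ≠ ⊤)
    (u : ℕ → ℝ → V)
    (husm : ∀ n, ContDiff ℝ (k : ℕ∞) (u n))
    (husm' : ∀ n, ContDiff ℝ ((k : ℕ∞) + 1) (fun t => e (u n t)))
    (M : ℝ≥0∞) (hM : M ≠ ⊤)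
    (hbV : ∀ n, ∀ i ≤ k,
      eLpNorm (iteratedDeriv i (u n)) p (volume.restrict (Ioo (0 : ℝ) T)) ≤ M)
    (hbH : ∀ n,
      eLpNorm (iteratedDeriv (k + 1) (fun t => e (u n t))) p (volume.restrict (Ioo (0 : ℝ) T))
        ≤ M) :
    (∃ φ : ℕ → ℕ, StrictMono φ ∧
      ∀ ε : ℝ, 0 < ε → ∃ N : ℕ, ∀ a ≥ N, ∀ b ≥ N, ∀ i ≤ k,
        eLpNorm
            (fun t => iteratedDeriv i (fun s => e (u (φ a) s)) t -
              iteratedDeriv i (fun s => e (u (φ b) s)) t)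
            q (volume.restrict (Ioo (0 : ℝ) T)) < ENNReal.ofReal ε) ∧
    (p = ⊤ → ∃ φ : ℕ → ℕ, StrictMono φ ∧
      ∀ ε : ℝ, 0 < ε → ∃ N : ℕ, ∀ a ≥ N, ∀ b ≥ N, ∀ i ≤ k, ∀ t ∈ Icc (0 : ℝ) T,
        ‖iteratedDeriv i (fun s => e (u (φ a) s)) t -
            iteratedDeriv i (fun s => e (u (φ b) s)) t‖ < ε) :=
  stmt16_general e hcomp T hT k p q hp hq1 hq u husm husm' M hM hbV hbH
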